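/- Let (q(t),v(t)) be a solution of the Kepler equations on S³ lying in TS³ with 0 < q0(t) < 1 and 𝐪(t) ≠ 0, and set (𝐐(t),𝐕(t)) = Ψ(q(t),v(t)) = (𝐪/q0, 𝛑). Then d𝐐/dt = 𝐕/q0² and d𝐕/dt = −γ𝐐/(q0²|𝐐|³); i.e., the gnomonic map Ψ maps the Kepler vector field X_H on the upper hemisphere of S³ to (1/q0²) times the Euclidean Kepler vector field X_{H_K}, so the two vector fields are C^∞-equivalent with time reparametrization τ(t) = ∫_{t0}^{t} ds/q0(s)². -/

import Mathlib

open Matrix Real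

noncomputable section

/-- The spatial (last three) components of a vector in `ℝ⁴`. -/
def sp (q : Fin 4 → ℝ) : Fin 3 → ℝ := fun i => q i.succ

/-- The Euclidean norm on `ℝ³`, written via the dot product. -/
def nrm3 (x : Fin 3 → ℝ) : ℝ := Real.sqrt (x ⬝ᵥ x)

/-- The first standard basis vector `e₀ = (1,0,0,0)` of `ℝ⁴`. -/
def e0 : Fin 4 → ℝ := fun i => if i = 0 then 1 else 0

/-- The (constraint set defining the) tangent bundle `TS³ ⊂ ℝ⁴ × ℝ⁴`. -/
def TS3 : Set ((Fin 4 → ℝ) × (Fin 4 → ℝ)) :=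
  {p | p.1 ⬝ᵥ p.1 = 1 ∧ p.1 ⬝ᵥ p.2 = 0}

/-- Right hand side of the Kepler equations of motion on `S³`:
`v̇ = γ e₀/(1-q₀²)^{3/2} - (⟨v,v⟩ + γ q₀/(1-q₀²)^{3/2}) q`. -/
def keplerRHS (γ : ℝ) (q v : Fin 4 → ℝ) : Fin 4 → ℝ :=
  (γ / (1 - q 0 ^ 2) ^ ((3 : ℝ) / 2)) • e0
    - (v ⬝ᵥ v + γ * q 0 / (1 - q 0 ^ 2) ^ ((3 : ℝ) / 2)) • q

/-- The Kepler Hamiltonian on `S³`: `H = ½⟨v,v⟩ - γ q₀ / (1-q₀²)^{1/2}`. -/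
def Hham (γ : ℝ) (p : (Fin 4 → ℝ) × (Fin 4 → ℝ)) : ℝ :=
  (1 / 2) * (p.2 ⬝ᵥ p.2) - γ * p.1 0 / Real.sqrt (1 - p.1 0 ^ 2)

/-- The angular momentum `𝛍 = 𝐪 × 𝐯`. -/
def mu (p : (Fin 4 → ℝ) × (Fin 4 → ℝ)) : Fin 3 → ℝ :=
  crossProduct (sp p.1) (sp p.2)

/-- The vector `𝛑 = q₀ 𝐯 - v₀ 𝐪`. -/
def pivec (p : (Fin 4 → ℝ) × (Fin 4 → ℝ)) : Fin 3 → ℝ :=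
  p.1 0 • sp p.2 - p.2 0 • sp p.1

/-- The Runge–Lenz vector `𝐀 = 𝛑 × 𝛍 - γ 𝐪/|𝐪|`. -/
def rl (γ : ℝ) (p : (Fin 4 → ℝ) × (Fin 4 → ℝ)) : Fin 3 → ℝ :=
  crossProduct (pivec p) (mu p) - (γ / nrm3 (sp p.1)) • sp p.1

/-- The energy-like integral `E = H - |𝛍|²/2`. -/
def Een (γ : ℝ) (p : (Fin 4 → ℝ) × (Fin 4 → ℝ)) : ℝ :=
  Hham γ p - (mu p ⬝ᵥ mu p) / 2

/-- `ν = γ / √(-2E)`. -/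
def nuLS (γ : ℝ) (p : (Fin 4 → ℝ) × (Fin 4 → ℝ)) : ℝ :=
  γ / Real.sqrt (-2 * Een γ p)


/-- The gnomonic map `Ψ(q,v) = (𝐐,𝐕) = (𝐪/q₀, 𝛑)`. -/
def Psi (p : (Fin 4 → ℝ) × (Fin 4 → ℝ)) : (Fin 3 → ℝ) × (Fin 3 → ℝ) :=
  ((p.1 0)⁻¹ • sp p.1, pivec p)

/-- The Euclidean Kepler Hamiltonian `H_K(𝐐,𝐕) = ½ 𝐕·𝐕 - γ/|𝐐|`. -/
def HK (γ : ℝ) (QV : (Fin 3 → ℝ) × (Fin 3 → ℝ)) : ℝ :=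
  (1 / 2) * (QV.2 ⬝ᵥ QV.2) - γ / nrm3 QV.1

/-! By the quotient rule `d(𝐪/q₀)/dt = (q₀𝐯 − v₀𝐪)/q₀² = 𝛑/q₀²`. Differentiating `𝛑 = q₀𝐯 − v₀𝐪`
the terms `v₀𝐯` cancel, and in `q₀ 𝐯̇ − v̇₀ 𝐪` the part of `v̇` along `q` drops out, so only the
`e₀`-force survives: `𝛑̇ = −γ𝐪/(1 − q₀²)^{3/2}`. On `S³` we have `|𝐪|² = 1 − q₀²`, hence
`|𝐐| = |𝐪|/q₀`, which rewrites this as `−γ𝐐/(q₀²|𝐐|³)`. -/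

lemma dotProduct_eq_mul_add_sp (x y : Fin 4 → ℝ) : x ⬝ᵥ y = x 0 * y 0 + sp x ⬝ᵥ sp y := by
  simp only [dotProduct, Fin.sum_univ_succ (n := 3), sp]

lemma sp_dotProduct_self_of_mem_TS3 {q v : Fin 4 → ℝ} (h : (q, v) ∈ TS3) :
    sp q ⬝ᵥ sp q = 1 - q 0 ^ 2 := by
  have h1 : q ⬝ᵥ q = 1 := h.1
  rw [dotProduct_eq_mul_add_sp] at h1
  linarith

lemma nrm3_smul (c : ℝ) (x : Fin 3 → ℝ) : nrm3 (c • x) = |c| * nrm3 x := by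
  rw [nrm3, nrm3, smul_dotProduct, dotProduct_smul, smul_eq_mul, smul_eq_mul, ← mul_assoc,
    Real.sqrt_mul (mul_self_nonneg c), Real.sqrt_mul_self_eq_abs]

lemma nrm3_pow_three (x : Fin 3 → ℝ) : nrm3 x ^ 3 = (x ⬝ᵥ x) ^ ((3 : ℝ) / 2) := by
  have hx : 0 ≤ x ⬝ᵥ x := Finset.sum_nonneg fun i _ => mul_self_nonneg (x i)
  rw [nrm3, Real.sqrt_eq_rpow, ← Real.rpow_natCast, ← Real.rpow_mul hx]
  norm_num

lemma HasDerivAt.sp {f : ℝ → Fin 4 → ℝ} {f' : Fin 4 → ℝ} {t : ℝ} (h : HasDerivAt f f' t) :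
    HasDerivAt (fun s => sp (f s)) (sp f') t :=
  hasDerivAt_pi.2 fun i => hasDerivAt_pi.1 h i.succ

lemma HasDerivAt.apply_zero {f : ℝ → Fin 4 → ℝ} {f' : Fin 4 → ℝ} {t : ℝ} (h : HasDerivAt f f' t) :
    HasDerivAt (fun s => f s 0) (f' 0) t :=
  hasDerivAt_pi.1 h 0

lemma pivec_keplerRHS (γ : ℝ) (q v : Fin 4 → ℝ) :
    q 0 • sp (keplerRHS γ q v) - keplerRHS γ q v 0 • sp q
      = -(γ / (1 - q 0 ^ 2) ^ ((3 : ℝ) / 2)) • sp q := by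
  have hsp : sp (keplerRHS γ q v)
      = -(v ⬝ᵥ v + γ * q 0 / (1 - q 0 ^ 2) ^ ((3 : ℝ) / 2)) • sp q := by
    ext i
    simp only [sp, keplerRHS, Pi.sub_apply, Pi.smul_apply, e0, Fin.succ_ne_zero, ↓reduceIte,
      smul_eq_mul, mul_zero, zero_sub]
    ring
  rw [hsp]
  simp only [keplerRHS, Pi.sub_apply, Pi.smul_apply, e0, if_pos, smul_eq_mul]
  module

lemma hasDerivAt_gnomonic {q : ℝ → Fin 4 → ℝ} {v : Fin 4 → ℝ} {t : ℝ}
    (hq : HasDerivAt q v t) (h0 : q t 0 ≠ 0) :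
    HasDerivAt (fun s => (q s 0)⁻¹ • sp (q s)) ((1 / q t 0 ^ 2) • pivec (q t, v)) t := by
  refine ((hq.apply_zero.inv h0).smul hq.sp).congr_deriv ?_
  simp only [pivec, Pi.inv_apply]
  match_scalars <;> field_simp

lemma hasDerivAt_pivec {q v : ℝ → Fin 4 → ℝ} {a : Fin 4 → ℝ} {t : ℝ}
    (hq : HasDerivAt q (v t) t) (hv : HasDerivAt v a t) :
    HasDerivAt (fun s => pivec (q s, v s)) (q t 0 • sp a - a 0 • sp (q t)) t := by
  refine ((hq.apply_zero.smul hv.sp).sub (hv.apply_zero.smul hq.sp)).congr_deriv ?_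
  module

lemma kepler_force_inv_smul (γ : ℝ) {c : ℝ} (hc : 0 < c) (x : Fin 3 → ℝ) :
    (γ / (c ^ 2 * nrm3 (c⁻¹ • x) ^ 3)) • (c⁻¹ • x) = (γ / nrm3 x ^ 3) • x := by
  rw [nrm3_smul, abs_of_pos (inv_pos.2 hc), smul_smul]
  congr 1
  field_simp

theorem gnomonic_map_conjugates_up_to_time_rescaling_general (γ : ℝ) (I : Set ℝ)
    (q v : ℝ → Fin 4 → ℝ)
    (hq : ∀ t ∈ I, HasDerivAt q (v t) t)
    (hv : ∀ t ∈ I, HasDerivAt v (keplerRHS γ (q t) (v t)) t)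
    (hTS : ∀ t ∈ I, (q t, v t) ∈ TS3)
    (hq0 : ∀ t ∈ I, 0 < q t 0 ∧ q t 0 < 1) :
    ∀ t ∈ I,
      HasDerivAt (fun s => (Psi (q s, v s)).1) ((1 / q t 0 ^ 2) • (Psi (q t, v t)).2) t ∧
      HasDerivAt (fun s => (Psi (q s, v s)).2)
        (-(γ / (q t 0 ^ 2 * nrm3 ((Psi (q t, v t)).1) ^ 3)) • (Psi (q t, v t)).1) t := by
  intro t ht
  have hq0t : 0 < q t 0 := (hq0 t ht).1
  refine ⟨hasDerivAt_gnomonic (hq t ht) hq0t.ne', ?_⟩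
  have hforce : (γ / (q t 0 ^ 2 * nrm3 (Psi (q t, v t)).1 ^ 3)) • (Psi (q t, v t)).1
      = (γ / (1 - q t 0 ^ 2) ^ ((3 : ℝ) / 2)) • sp (q t) := by
    rw [Psi, kepler_force_inv_smul γ hq0t, nrm3_pow_three,
      sp_dotProduct_self_of_mem_TS3 (hTS t ht)]
  rw [neg_smul, hforce, ← neg_smul, ← pivec_keplerRHS γ (q t) (v t)]
  exact hasDerivAt_pivec (hq t ht) (hv t ht)

theorem gnomonic_map_conjugates_up_to_time_rescaling (γ : ℝ) (hγ : 0 < γ) (I : Set ℝ) (hI : Convex ℝ I)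
    (q v : ℝ → Fin 4 → ℝ)
    (hq : ∀ t ∈ I, HasDerivAt q (v t) t)
    (hv : ∀ t ∈ I, HasDerivAt v (keplerRHS γ (q t) (v t)) t)
    (hTS : ∀ t ∈ I, (q t, v t) ∈ TS3)
    (hq0 : ∀ t ∈ I, 0 < q t 0 ∧ q t 0 < 1)
    (hqnz : ∀ t ∈ I, sp (q t) ≠ 0) :
    ∀ t ∈ I,
      HasDerivAt (fun s => (Psi (q s, v s)).1) ((1 / q t 0 ^ 2) • (Psi (q t, v t)).2) t ∧
      HasDerivAt (fun s => (Psi (q s, v s)).2)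
        (-(γ / (q t 0 ^ 2 * nrm3 ((Psi (q t, v t)).1) ^ 3)) • (Psi (q t, v t)).1) t :=
  gnomonic_map_conjugates_up_to_time_rescaling_general γ I q v hq hv hTS hq0

end
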